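/- Let k ≥ 2 be an integer and let j, j' ∈ {1,…,k} be distinct. Then the inequality ∑_{v ∈ B_{j,j'}} x_v ≤ k−1 is valid for STAB(H_k) and defines a facet of STAB(H_k): there exist 3k stable sets of H_k whose 0/1 incidence vectors are affinely independent and each satisfy ∑_{v ∈ B_{j,j'}} x_v = k−1. -/
import Mathlib


open Finset

noncomputable section

/-- `cone(P)`: the homogenization of `P`, indexed by `Option V` with `none` playing
the role of the `0` coordinate. -/
def lsCone {V : Type*} (P : Set (V → ℝ)) : Set (Option V → ℝ) :=
  {y | ∃ (lam : ℝ) (x : V → ℝ), 0 ≤ lam ∧ x ∈ P ∧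
    y = fun o => o.elim lam (fun v => lam * x v)}

/-- The lift `LŜ₊(P)`: symmetric PSD matrices `Y` indexed by `Option V`
with `Y e₀ = diag Y` and all columns conditions. -/
def lsLift {V : Type*} [Fintype V] [DecidableEq V] (P : Set (V → ℝ)) :
    Set (Matrix (Option V) (Option V) ℝ) :=
  {Y | Y.PosSemidef ∧ Y.mulVec (Pi.single none 1) = Matrix.diag Y ∧
      ∀ v : V, Y.mulVec (Pi.single (some v) 1) ∈ lsCone P ∧
        Y.mulVec (Pi.single none 1 - Pi.single (some v) 1) ∈ lsCone P}

/-- The Lovász–Schrijver operator `LS₊`. -/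
def lsPlus {V : Type*} [Fintype V] [DecidableEq V] (P : Set (V → ℝ)) : Set (V → ℝ) :=
  {x | ∃ Y ∈ lsLift P, Y.mulVec (Pi.single none 1) = fun o => o.elim 1 x}

/-- The fractional stable set polytope. -/
def FRAC {V : Type*} (G : SimpleGraph V) : Set (V → ℝ) :=
  {x | (∀ v, 0 ≤ x v ∧ x v ≤ 1) ∧ ∀ u v, G.Adj u v → x u + x v ≤ 1}

/-- The stable set polytope: convex hull of incidence vectors of stable sets. -/
def STAB {V : Type*} (G : SimpleGraph V) : Set (V → ℝ) :=
  convexHull ℝ {x | ∃ S : Set V, (∀ u ∈ S, ∀ v ∈ S, ¬ G.Adj u v) ∧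
    x = S.indicator fun _ => (1 : ℝ)}

/-- The graph `H_k`, on vertex set `Fin k × Fin 3` (vertex `i_p` is `(i, p)`). -/
def Hgraph (k : ℕ) : SimpleGraph (Fin k × Fin 3) :=
  SimpleGraph.fromRel (fun a b =>
    (a.1 = b.1 ∧ ((a.2 = 0 ∧ b.2 = 1) ∨ (a.2 = 1 ∧ b.2 = 2))) ∨
    (a.1 ≠ b.1 ∧ a.2 = 0 ∧ b.2 = 2))

/-- The vector `w_k(a,b)`: entry `a` on `[k]₀ ∪ [k]₂` and `b` on `[k]₁`. -/
def wVec (k : ℕ) (a b : ℝ) : Fin k × Fin 3 → ℝ := fun v => if v.2 = 1 then b else a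

/-- The set `B_{j,j'} = V(H_k) \\ {j₁, j₂, j'₀, j'₁}`. -/
def Bset (k : ℕ) (j j' : Fin k) : Finset (Fin k × Fin 3) :=
  Finset.univ \ {(j, 1), (j, 2), (j', 0), (j', 1)}

lemma adj_iff (k : ℕ) (u v : Fin k × Fin 3) : (Hgraph k).Adj u v ↔ u ≠ v ∧
    (((u.1 = v.1 ∧ ((u.2 = 0 ∧ v.2 = 1) ∨ (u.2 = 1 ∧ v.2 = 2))) ∨
    (u.1 ≠ v.1 ∧ u.2 = 0 ∧ v.2 = 2)) ∨
    ((v.1 = u.1 ∧ ((v.2 = 0 ∧ u.2 = 1) ∨ (v.2 = 1 ∧ u.2 = 2))) ∨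
    (v.1 ≠ u.1 ∧ v.2 = 0 ∧ u.2 = 2))) := by
  simp [Hgraph, SimpleGraph.fromRel_adj]

def SA (k : ℕ) (i : Fin k) : Finset (Fin k × Fin 3) :=
  Finset.univ.filter (fun v => (v.1 = i ∧ v.2 ≠ 1) ∨ (v.1 ≠ i ∧ v.2 = 1))

def SC (k : ℕ) (j : Fin k) (i : Fin k) : Finset (Fin k × Fin 3) :=
  Finset.univ.filter (fun v => (v.2 = 0 ∧ (i = j ∨ v.1 ≠ i)) ∨ (v = (i,1) ∧ i ≠ j))

def SD (k : ℕ) (j' : Fin k) (i : Fin k) : Finset (Fin k × Fin 3) :=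
  Finset.univ.filter (fun v => (v.2 = 2 ∧ (i = j' ∨ v.1 ≠ i)) ∨ (v = (i,1) ∧ i ≠ j'))

lemma memSA (k : ℕ) (i : Fin k) (v : Fin k × Fin 3) :
    v ∈ SA k i ↔ (v.1 = i ∧ v.2 ≠ 1) ∨ (v.1 ≠ i ∧ v.2 = 1) := by simp [SA]

lemma memSC (k : ℕ) (j i : Fin k) (v : Fin k × Fin 3) :
    v ∈ SC k j i ↔ (v.2 = 0 ∧ (i = j ∨ v.1 ≠ i)) ∨ (v = (i,1) ∧ i ≠ j) := by simp [SC]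

lemma memSD (k : ℕ) (j' i : Fin k) (v : Fin k × Fin 3) :
    v ∈ SD k j' i ↔ (v.2 = 2 ∧ (i = j' ∨ v.1 ≠ i)) ∨ (v = (i,1) ∧ i ≠ j') := by simp [SD]

lemma stableSA (k : ℕ) (i : Fin k) : ∀ u ∈ SA k i, ∀ v ∈ SA k i, ¬ (Hgraph k).Adj u v := by
  intro u hu v hv hadj
  rw [memSA] at hu hv
  rw [adj_iff] at hadj
  obtain ⟨hne, hrel⟩ := hadj
  rcases hu with ⟨hu1, hu2⟩ | ⟨hu1, hu2⟩ <;> rcases hv with ⟨hv1, hv2⟩ | ⟨hv1, hv2⟩ <;>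
    rcases hrel with (⟨h1, (⟨h2,h3⟩|⟨h2,h3⟩)⟩ | ⟨h1,h2,h3⟩) | (⟨h1, (⟨h2,h3⟩|⟨h2,h3⟩)⟩ | ⟨h1,h2,h3⟩) <;>
    simp_all

lemma stableSC (k : ℕ) (j i : Fin k) : ∀ u ∈ SC k j i, ∀ v ∈ SC k j i, ¬ (Hgraph k).Adj u v := by
  intro u hu v hv hadj
  rw [memSC] at hu hv
  rw [adj_iff] at hadj
  obtain ⟨hne, hrel⟩ := hadj
  rcases hu with ⟨hu1, hu2⟩ | ⟨hu1, hu2⟩ <;> rcases hv with ⟨hv1, hv2⟩ | ⟨hv1, hv2⟩ <;>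
    rcases hrel with (⟨h1, (⟨h2,h3⟩|⟨h2,h3⟩)⟩ | ⟨h1,h2,h3⟩) | (⟨h1, (⟨h2,h3⟩|⟨h2,h3⟩)⟩ | ⟨h1,h2,h3⟩) <;>
    simp_all [Prod.ext_iff]

lemma stableSD (k : ℕ) (j' i : Fin k) : ∀ u ∈ SD k j' i, ∀ v ∈ SD k j' i, ¬ (Hgraph k).Adj u v := by
  intro u hu v hv hadj
  rw [memSD] at hu hv
  rw [adj_iff] at hadj
  obtain ⟨hne, hrel⟩ := hadj
  rcases hu with ⟨hu1, hu2⟩ | ⟨hu1, hu2⟩ <;> rcases hv with ⟨hv1, hv2⟩ | ⟨hv1, hv2⟩ <;>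
    rcases hrel with (⟨h1, (⟨h2,h3⟩|⟨h2,h3⟩)⟩ | ⟨h1,h2,h3⟩) | (⟨h1, (⟨h2,h3⟩|⟨h2,h3⟩)⟩ | ⟨h1,h2,h3⟩) <;>
    simp_all [Prod.ext_iff]

lemma Bsum (k : ℕ) (j j' : Fin k) (hjj : j ≠ j') (f : Fin k × Fin 3 → ℝ) :
    ∑ v ∈ Bset k j j', f v
      = (∑ v, f v) - (f (j,1) + f (j,2) + f (j',0) + f (j',1)) := by
  rw [Bset, Finset.sum_sdiff_eq_sub (Finset.subset_univ _)]
  congr 1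
  rw [Finset.sum_insert (by simp [Prod.ext_iff, hjj]),
      Finset.sum_insert (by simp [Prod.ext_iff, hjj]),
      Finset.sum_insert (by simp [Prod.ext_iff]), Finset.sum_singleton]
  ring

lemma tightSD (k : ℕ) (j j' i : Fin k) (hjj : j ≠ j') :
    ∑ v ∈ Bset k j j', (if v ∈ SD k j' i then (1:ℝ) else 0) = k - 1 := by
  rw [Bsum k j j' hjj]
  have h1 : ∑ v : Fin k × Fin 3, (if v ∈ SD k j' i then (1:ℝ) else 0) = k := by
    rw [Fintype.sum_prod_type]
    have h2 : ∀ i' : Fin k, ∑ p : Fin 3, (if (i',p) ∈ SD k j' i then (1:ℝ) else 0) = 1 := by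
      intro i'
      rw [Fin.sum_univ_three]
      simp only [memSD, Prod.ext_iff]
      by_cases h : i = j' <;> by_cases h2 : i' = i <;> simp [h, h2]
    rw [Finset.sum_congr rfl (fun i' _ => h2 i')]
    simp
  rw [h1]
  have e3 : ¬ ((j',(0:Fin 3)) ∈ SD k j' i) := by simp [memSD, Prod.ext_iff]
  have e4 : ¬ ((j',(1:Fin 3)) ∈ SD k j' i) := by
    simp [memSD, Prod.ext_iff]; rintro rfl; simp
  by_cases h : i = j
  · have e1 : ((j,(1:Fin 3)) ∈ SD k j' i) := by
      subst h; simp [memSD, Prod.ext_iff]; tauto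
    have e2 : ¬ ((j,(2:Fin 3)) ∈ SD k j' i) := by
      subst h; simp [memSD, Prod.ext_iff]; tauto
    simp [e1, e2, e3, e4]
  · have e1 : ¬ ((j,(1:Fin 3)) ∈ SD k j' i) := by
      simp [memSD, Prod.ext_iff]; rintro rfl; exact absurd rfl h
    have e2 : ((j,(2:Fin 3)) ∈ SD k j' i) := by
      simp [memSD, Prod.ext_iff]; tauto
    simp [e1, e2, e3, e4]

lemma tightSA (k : ℕ) (j j' i : Fin k) (hjj : j ≠ j') :
    ∑ v ∈ Bset k j j', (if v ∈ SA k i then (1:ℝ) else 0) = k + 1 - 2 := by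
  rw [Bsum k j j' hjj]
  have h1 : ∑ v : Fin k × Fin 3, (if v ∈ SA k i then (1:ℝ) else 0) = k + 1 := by
    rw [Fintype.sum_prod_type]
    have h2 : ∀ i' : Fin k, ∑ p : Fin 3, (if (i',p) ∈ SA k i then (1:ℝ) else 0)
        = 1 + (if i' = i then 1 else 0) := by
      intro i'
      rw [Fin.sum_univ_three]
      simp only [memSA, Prod.ext_iff]
      by_cases h2 : i' = i <;> simp [h2]
    rw [Finset.sum_congr rfl (fun i' _ => h2 i')]
    simp [Finset.sum_add_distrib]
  rw [h1]
  by_cases h : j = i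
  · by_cases h' : j' = i
    · exact absurd (h.trans h'.symm) hjj
    · subst h; simp [memSA, h']; ring
  · by_cases h' : j' = i
    · subst h'; simp [memSA, h]; ring
    · simp [memSA, h, h']; ring

lemma fin3cases (p : Fin 3) : p = 0 ∨ p = 1 ∨ p = 2 := by fin_cases p <;> simp

lemma adj01 (k : ℕ) (i : Fin k) : (Hgraph k).Adj (i,0) (i,1) := by
  rw [adj_iff]; refine ⟨by simp [Prod.ext_iff], ?_⟩; simp

lemma adj12 (k : ℕ) (i : Fin k) : (Hgraph k).Adj (i,1) (i,2) := by
  rw [adj_iff]; refine ⟨by simp [Prod.ext_iff], ?_⟩; simp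

lemma adj02 (k : ℕ) {i i' : Fin k} (h : i ≠ i') : (Hgraph k).Adj (i,0) (i',2) := by
  rw [adj_iff]; refine ⟨by simp [Prod.ext_iff, h], ?_⟩; simp [h]


lemma sum_bound_one (k : ℕ) (a : Fin k) :
    ∑ i : Fin k, (if i = a then 0 else 1) = k - 1 := by
  have h : ∀ i : Fin k, (if i = a then 0 else 1) = if ¬ i = a then 1 else 0 := by
    intro i; by_cases h : i = a <;> simp [h]
  rw [Finset.sum_congr rfl (fun i _ => h i), ← Finset.card_filter]
  rw [show (Finset.univ.filter (fun i : Fin k => ¬ i = a)) = Finset.univ.erase a by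
    ext x; simp [Finset.mem_erase]]
  simp [Finset.card_erase_of_mem]

lemma sum_bound_main (k : ℕ) (m j j' : Fin k) (hmj : m ≠ j) (hmj' : m ≠ j')
    (hjj : j ≠ j') :
    ∑ i : Fin k, (if i = m then 2 else if i = j ∨ i = j' then 0 else 1) = k - 1 := by
  have hk3 : 3 ≤ k := by
    have hs : ({m, j, j'} : Finset (Fin k)).card = 3 := by
      rw [Finset.card_insert_of_notMem (by simp [hmj, hmj']),
          Finset.card_insert_of_notMem (by simp [hjj]), Finset.card_singleton]
    calc 3 = ({m, j, j'} : Finset (Fin k)).card := hs.symm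
    _ ≤ (Finset.univ : Finset (Fin k)).card := Finset.card_le_card (Finset.subset_univ _)
    _ = k := by simp
  have h : ∀ i : Fin k, (if i = m then 2 else if i = j ∨ i = j' then 0 else 1)
      = (if i = m then 2 else 0) + (if ¬ (i = m ∨ i = j ∨ i = j') then 1 else 0) := by
    intro i
    by_cases h1 : i = m
    · simp [h1, hmj, hmj']
    · by_cases h2 : i = j ∨ i = j' <;> simp [h1, h2]
  rw [Finset.sum_congr rfl (fun i _ => h i), Finset.sum_add_distrib]
  rw [Finset.sum_ite_eq' Finset.univ m (fun _ => 2)]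
  rw [← Finset.card_filter]
  have : (Finset.univ.filter (fun i : Fin k => ¬ (i = m ∨ i = j ∨ i = j')))
      = Finset.univ \ ({m, j, j'} : Finset (Fin k)) := by
    ext x; simp
  rw [this, Finset.card_sdiff_of_subset (Finset.subset_univ _)]
  have hs : ({m, j, j'} : Finset (Fin k)).card = 3 := by
    rw [Finset.card_insert_of_notMem (by simp [hmj, hmj']),
        Finset.card_insert_of_notMem (by simp [hjj]), Finset.card_singleton]
  simp [hs]
  omega

lemma card_bound (k : ℕ) (j j' : Fin k) (hjj : j ≠ j') (S : Set (Fin k × Fin 3))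
    [DecidablePred (· ∈ S)]
    (hS : ∀ u ∈ S, ∀ v ∈ S, ¬ (Hgraph k).Adj u v) :
    ((Bset k j j').filter (· ∈ S)).card ≤ k - 1 := by
  set T := (Bset k j j').filter (· ∈ S) with hTdef
  have hTS : ∀ v ∈ T, v ∈ S := fun v hv => (Finset.mem_filter.mp hv).2
  have hTB : ∀ v ∈ T, v ≠ (j,1) ∧ v ≠ (j,2) ∧ v ≠ (j',0) ∧ v ≠ (j',1) := by
    intro v hv
    have h := (Finset.mem_filter.mp hv).1
    rw [Bset, Finset.mem_sdiff] at h
    have := h.2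
    simp only [Finset.mem_insert, Finset.mem_singleton] at this
    push_neg at this
    exact ⟨this.1, this.2.1, this.2.2.1, this.2.2.2⟩
  have hnadj : ∀ u ∈ T, ∀ v ∈ T, ¬ (Hgraph k).Adj u v :=
    fun u hu v hv => hS u (hTS u hu) v (hTS v hv)
  rw [Finset.card_eq_sum_card_fiberwise (f := Prod.fst) (t := Finset.univ)
    (fun x _ => Finset.mem_univ _)]
  by_cases h0 : ∃ a ∈ T, a.2 = 0
  · by_cases h2 : ∃ b ∈ T, b.2 = 2
    · -- main case
      obtain ⟨a, haT, ha2⟩ := h0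
      obtain ⟨b, hbT, hb2⟩ := h2
      have ha : a = (a.1, 0) := Prod.ext_iff.mpr ⟨rfl, ha2⟩
      have hab : b.1 = a.1 := by
        by_contra hne
        have hb : b = (b.1, 2) := Prod.ext_iff.mpr ⟨rfl, hb2⟩
        exact hnadj a haT b hbT (by rw [ha, hb]; exact adj02 k (fun h => hne h.symm))
      have hb : b = (a.1, 2) := Prod.ext_iff.mpr ⟨hab, hb2⟩
      have hmj : a.1 ≠ j := by
        intro h; exact (hTB b hbT).2.1 (by rw [hb, h])
      have hmj' : a.1 ≠ j' := by
        intro h; exact (hTB a haT).2.2.1 (by rw [ha, h])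
      calc ∑ i : Fin k, (T.filter (fun v => v.1 = i)).card
          ≤ ∑ i : Fin k, (if i = a.1 then 2 else if i = j ∨ i = j' then 0 else 1) := by
            apply Finset.sum_le_sum
            intro i _
            by_cases him : i = a.1
            · rw [if_pos him]
              have hsub : T.filter (fun v => v.1 = i) ⊆ {(i, 0), (i, 2)} := by
                intro v hv
                obtain ⟨hvT, hv1⟩ := Finset.mem_filter.mp hv
                rcases fin3cases v.2 with h | h | h
                · simp [Prod.ext_iff, hv1, h]
                · exfalso
                  have hveq : v = (i, 1) := Prod.ext_iff.mpr ⟨hv1, h⟩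
                  have ha' : a = (i, 0) := by rw [him]; exact ha
                  exact hnadj a haT v hvT (by rw [ha', hveq]; exact adj01 k i)
                · simp [Prod.ext_iff, hv1, h]
              calc (T.filter (fun v => v.1 = i)).card ≤ ({(i,0),(i,2)} : Finset _).card :=
                    Finset.card_le_card hsub
                _ ≤ 2 := (Finset.card_insert_le _ _).trans (by simp)
            · rw [if_neg him]
              by_cases hij : i = j ∨ i = j'
              · rw [if_pos hij, Nat.le_zero, Finset.card_eq_zero,
                  Finset.eq_empty_iff_forall_notMem]
                intro v hv
                obtain ⟨hvT, hv1⟩ := Finset.mem_filter.mp hv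
                rcases hij with hij | hij
                · rcases fin3cases v.2 with h | h | h
                  · have hveq : v = (i, 0) := Prod.ext_iff.mpr ⟨hv1, h⟩
                    exact hnadj v hvT b hbT
                      (by rw [hveq, hb]; exact adj02 k (fun hh => him hh))
                  · exact (hTB v hvT).1 (Prod.ext_iff.mpr ⟨hv1.trans hij, h⟩)
                  · exact (hTB v hvT).2.1 (Prod.ext_iff.mpr ⟨hv1.trans hij, h⟩)
                · rcases fin3cases v.2 with h | h | h
                  · exact (hTB v hvT).2.2.1 (Prod.ext_iff.mpr ⟨hv1.trans hij, h⟩)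
                  · exact (hTB v hvT).2.2.2 (Prod.ext_iff.mpr ⟨hv1.trans hij, h⟩)
                  · have hveq : v = (i, 2) := Prod.ext_iff.mpr ⟨hv1, h⟩
                    exact hnadj a haT v hvT
                      (by rw [ha, hveq]; exact adj02 k (fun hh => him hh.symm))
              · rw [if_neg hij, Finset.card_le_one]
                intro u hu v hv
                obtain ⟨huT, hu1⟩ := Finset.mem_filter.mp hu
                obtain ⟨hvT, hv1⟩ := Finset.mem_filter.mp hv
                have key : ∀ w ∈ T, w.1 = i → w = (i, 1) := by
                  intro w hwT hw1
                  rcases fin3cases w.2 with h | h | h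
                  · exfalso
                    have hweq : w = (i, 0) := Prod.ext_iff.mpr ⟨hw1, h⟩
                    exact hnadj w hwT b hbT
                      (by rw [hweq, hb]; exact adj02 k (fun hh => him hh))
                  · exact Prod.ext_iff.mpr ⟨hw1, h⟩
                  · exfalso
                    have hweq : w = (i, 2) := Prod.ext_iff.mpr ⟨hw1, h⟩
                    exact hnadj a haT w hwT
                      (by rw [ha, hweq]; exact adj02 k (fun hh => him hh.symm))
                rw [key u huT hu1, key v hvT hv1]
        _ = k - 1 := sum_bound_main k a.1 j j' hmj hmj' hjj
    · -- no vertex at level 2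
      push_neg at h2
      calc ∑ i : Fin k, (T.filter (fun v => v.1 = i)).card
          ≤ ∑ i : Fin k, (if i = j' then 0 else 1) := by
            apply Finset.sum_le_sum
            intro i _
            by_cases hi : i = j'
            · rw [if_pos hi, Nat.le_zero, Finset.card_eq_zero,
                Finset.eq_empty_iff_forall_notMem]
              intro v hv
              obtain ⟨hvT, hv1⟩ := Finset.mem_filter.mp hv
              rcases fin3cases v.2 with h | h | h
              · exact (hTB v hvT).2.2.1 (Prod.ext_iff.mpr ⟨hv1.trans hi, h⟩)
              · exact (hTB v hvT).2.2.2 (Prod.ext_iff.mpr ⟨hv1.trans hi, h⟩)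
              · exact h2 v hvT h
            · rw [if_neg hi, Finset.card_le_one]
              intro u hu v hv
              obtain ⟨huT, hu1⟩ := Finset.mem_filter.mp hu
              obtain ⟨hvT, hv1⟩ := Finset.mem_filter.mp hv
              rcases fin3cases u.2 with hu2 | hu2 | hu2 <;>
                rcases fin3cases v.2 with hv2 | hv2 | hv2
              · have e1 : u = (i, 0) := Prod.ext_iff.mpr ⟨hu1, hu2⟩
                have e2 : v = (i, 0) := Prod.ext_iff.mpr ⟨hv1, hv2⟩
                rw [e1, e2]
              · exfalso
                have e1 : u = (i, 0) := Prod.ext_iff.mpr ⟨hu1, hu2⟩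
                have e2 : v = (i, 1) := Prod.ext_iff.mpr ⟨hv1, hv2⟩
                exact hnadj u huT v hvT (by rw [e1, e2]; exact adj01 k i)
              · exact absurd hv2 (h2 v hvT)
              · exfalso
                have e1 : u = (i, 1) := Prod.ext_iff.mpr ⟨hu1, hu2⟩
                have e2 : v = (i, 0) := Prod.ext_iff.mpr ⟨hv1, hv2⟩
                exact hnadj v hvT u huT (by rw [e1, e2]; exact adj01 k i)
              · have e1 : u = (i, 1) := Prod.ext_iff.mpr ⟨hu1, hu2⟩
                have e2 : v = (i, 1) := Prod.ext_iff.mpr ⟨hv1, hv2⟩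
                rw [e1, e2]
              · exact absurd hv2 (h2 v hvT)
              · exact absurd hu2 (h2 u huT)
              · exact absurd hu2 (h2 u huT)
              · exact absurd hu2 (h2 u huT)
        _ = k - 1 := sum_bound_one k j'
  · -- no vertex at level 0
    push_neg at h0
    calc ∑ i : Fin k, (T.filter (fun v => v.1 = i)).card
        ≤ ∑ i : Fin k, (if i = j then 0 else 1) := by
          apply Finset.sum_le_sum
          intro i _
          by_cases hi : i = j
          · rw [if_pos hi, Nat.le_zero, Finset.card_eq_zero,
              Finset.eq_empty_iff_forall_notMem]
            intro v hv
            obtain ⟨hvT, hv1⟩ := Finset.mem_filter.mp hv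
            rcases fin3cases v.2 with h | h | h
            · exact h0 v hvT h
            · exact (hTB v hvT).1 (Prod.ext_iff.mpr ⟨hv1.trans hi, h⟩)
            · exact (hTB v hvT).2.1 (Prod.ext_iff.mpr ⟨hv1.trans hi, h⟩)
          · rw [if_neg hi, Finset.card_le_one]
            intro u hu v hv
            obtain ⟨huT, hu1⟩ := Finset.mem_filter.mp hu
            obtain ⟨hvT, hv1⟩ := Finset.mem_filter.mp hv
            rcases fin3cases u.2 with hu2 | hu2 | hu2 <;>
              rcases fin3cases v.2 with hv2 | hv2 | hv2
            · exact absurd hu2 (h0 u huT)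
            · exact absurd hu2 (h0 u huT)
            · exact absurd hu2 (h0 u huT)
            · exact absurd hv2 (h0 v hvT)
            · have e1 : u = (i, 1) := Prod.ext_iff.mpr ⟨hu1, hu2⟩
              have e2 : v = (i, 1) := Prod.ext_iff.mpr ⟨hv1, hv2⟩
              rw [e1, e2]
            · exfalso
              have e1 : u = (i, 1) := Prod.ext_iff.mpr ⟨hu1, hu2⟩
              have e2 : v = (i, 2) := Prod.ext_iff.mpr ⟨hv1, hv2⟩
              exact hnadj u huT v hvT (by rw [e1, e2]; exact adj12 k i)
            · exact absurd hv2 (h0 v hvT)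
            · exfalso
              have e1 : u = (i, 2) := Prod.ext_iff.mpr ⟨hu1, hu2⟩
              have e2 : v = (i, 1) := Prod.ext_iff.mpr ⟨hv1, hv2⟩
              exact hnadj v hvT u huT (by rw [e1, e2]; exact adj12 k i)
            · have e1 : u = (i, 2) := Prod.ext_iff.mpr ⟨hu1, hu2⟩
              have e2 : v = (i, 2) := Prod.ext_iff.mpr ⟨hv1, hv2⟩
              rw [e1, e2]
      _ = k - 1 := sum_bound_one k j

lemma tightSC (k : ℕ) (j j' i : Fin k) (hjj : j ≠ j') :
    ∑ v ∈ Bset k j j', (if v ∈ SC k j i then (1:ℝ) else 0) = k - 1 := by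
  rw [Bsum k j j' hjj]
  have h1 : ∑ v : Fin k × Fin 3, (if v ∈ SC k j i then (1:ℝ) else 0) = k := by
    rw [Fintype.sum_prod_type]
    have h2 : ∀ i' : Fin k, ∑ p : Fin 3, (if (i',p) ∈ SC k j i then (1:ℝ) else 0) = 1 := by
      intro i'
      rw [Fin.sum_univ_three]
      simp only [memSC, Prod.ext_iff]
      by_cases h : i = j <;> by_cases h2 : i' = i <;> first | simp [h, h2] | simp [h, h2, Ne.symm h2]
    rw [Finset.sum_congr rfl (fun i' _ => h2 i')]
    simp
  rw [h1]
  have e1 : ¬ ((j,(1:Fin 3)) ∈ SC k j i) := by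
    simp [memSC, Prod.ext_iff]; rintro rfl; simp
  have e2 : ¬ ((j,(2:Fin 3)) ∈ SC k j i) := by simp [memSC, Prod.ext_iff]
  by_cases h : i = j'
  · have e3 : ¬ ((j',(0:Fin 3)) ∈ SC k j i) := by
      subst h; simp [memSC, Prod.ext_iff]; exact fun h' => absurd h'.symm hjj
    have e4 : ((j',(1:Fin 3)) ∈ SC k j i) := by
      subst h; simp [memSC, Prod.ext_iff]; exact fun h' => hjj h'.symm
    simp [e1, e2, e3, e4]
  · have e3 : ((j',(0:Fin 3)) ∈ SC k j i) := by simp [memSC, Prod.ext_iff, Ne.symm h]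
    have e4 : ¬ ((j',(1:Fin 3)) ∈ SC k j i) := by
      simp [memSC, Prod.ext_iff]; rintro rfl; exact absurd rfl h
    simp [e1, e2, e3, e4]

def Sfam (k : ℕ) (j j' : Fin k) (s : Fin k × Fin 3) : Finset (Fin k × Fin 3) :=
  ![SC k j s.1, SD k j' s.1, SA k s.1] s.2


lemma sum_if_not {k : ℕ} (f : Fin k → ℝ) (c : Fin k) :
    ∑ i', (if ¬ c = i' then f i' else 0) = (∑ i', f i') - f c := by
  have h : ∀ i', (if ¬ c = i' then f i' else 0) = f i' - (if c = i' then f i' else 0) := by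
    intro i'; by_cases h : c = i' <;> simp [h]
  rw [Finset.sum_congr rfl (fun i' _ => h i'), Finset.sum_sub_distrib, Finset.sum_ite_eq]
  simp

lemma sum_if_or {k : ℕ} (f : Fin k → ℝ) (a c : Fin k) :
    ∑ i', (if i' = a ∨ ¬ c = i' then f i' else 0)
      = (∑ i', f i') - (if c = a then 0 else f c) := by
  by_cases h : c = a
  · subst h
    rw [Finset.sum_congr rfl (fun i' _ => if_pos (by
      by_cases h2 : c = i'
      · exact Or.inl h2.symm
      · exact Or.inr h2))]
    simp
  · have h2 : ∀ i', (if i' = a ∨ ¬ c = i' then f i' else 0)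
        = f i' - (if c = i' then f i' else 0) := by
      intro i'
      by_cases h3 : c = i'
      · rw [if_neg (by rw [← h3]; tauto)]; simp [h3]
      · rw [if_pos (Or.inr h3)]; simp [h3]
    rw [Finset.sum_congr rfl (fun i' _ => h2 i'), Finset.sum_sub_distrib, Finset.sum_ite_eq]
    simp [h]

lemma affind (k : ℕ) (j j' : Fin k) (hjj : j ≠ j') :
    AffineIndependent ℝ
      (fun s : Fin k × Fin 3 => (fun v => if v ∈ Sfam k j j' s then (1:ℝ) else 0)) := by
  rw [affineIndependent_iff_of_fintype]
  intro w hw hvsub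
  rw [Finset.univ.weightedVSub_eq_linear_combination hw] at hvsub
  have hev : ∀ v : Fin k × Fin 3,
      ∑ s : Fin k × Fin 3, w s * (if v ∈ Sfam k j j' s then (1:ℝ) else 0) = 0 := by
    intro v
    have h := congrFun hvsub v
    simpa [Finset.sum_apply] using h
  -- total sum split
  have hTot : (∑ i', w (i',0)) + (∑ i', w (i',1)) + (∑ i', w (i',2)) = 0 := by
    rw [Fintype.sum_prod_type] at hw
    rw [← Finset.sum_add_distrib, ← Finset.sum_add_distrib]
    rw [← hw]
    apply Finset.sum_congr rfl
    intro i' _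
    rw [Fin.sum_univ_three]
  -- the three families of equations
  have key0 : ∀ i : Fin k,
      ((∑ i', w (i',0)) - (if i = j then 0 else w (i,0))) + w (i,2) = 0 := by
    intro i
    have E := hev (i, 0)
    rw [Fintype.sum_prod_type] at E
    have h : ∀ i' : Fin k,
        (∑ q : Fin 3, w (i', q) * (if (i,(0:Fin 3)) ∈ Sfam k j j' (i', q) then (1:ℝ) else 0))
        = (if i' = j ∨ ¬ i = i' then w (i',0) else 0) + (if i = i' then w (i',2) else 0) := by
      intro i'
      rw [Fin.sum_univ_three]
      by_cases h1 : i' = j <;> by_cases h2 : i = i' <;>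
        simp [Sfam, memSC, memSD, memSA, Prod.ext_iff, h1, h2]
    rw [Finset.sum_congr rfl (fun i' _ => h i'), Finset.sum_add_distrib,
      Finset.sum_ite_eq, sum_if_or] at E
    simpa using E
  have key2 : ∀ i : Fin k,
      ((∑ i', w (i',1)) - (if i = j' then 0 else w (i,1))) + w (i,2) = 0 := by
    intro i
    have E := hev (i, 2)
    rw [Fintype.sum_prod_type] at E
    have h : ∀ i' : Fin k,
        (∑ q : Fin 3, w (i', q) * (if (i,(2:Fin 3)) ∈ Sfam k j j' (i', q) then (1:ℝ) else 0))
        = (if i' = j' ∨ ¬ i = i' then w (i',1) else 0) + (if i = i' then w (i',2) else 0) := by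
      intro i'
      rw [Fin.sum_univ_three]
      by_cases h1 : i' = j' <;> by_cases h2 : i = i' <;>
        simp [Sfam, memSC, memSD, memSA, Prod.ext_iff, h1, h2]
    rw [Finset.sum_congr rfl (fun i' _ => h i'), Finset.sum_add_distrib,
      Finset.sum_ite_eq, sum_if_or] at E
    simpa using E
  have key1 : ∀ i : Fin k,
      (if i = j then 0 else w (i,0)) + (if i = j' then 0 else w (i,1))
        + ((∑ i', w (i',2)) - w (i,2)) = 0 := by
    intro i
    have E := hev (i, 1)
    rw [Fintype.sum_prod_type] at E
    have h : ∀ i' : Fin k,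
        (∑ q : Fin 3, w (i', q) * (if (i,(1:Fin 3)) ∈ Sfam k j j' (i', q) then (1:ℝ) else 0))
        = (if i = i' then (if i' = j then 0 else w (i',0)) else 0)
          + (if i = i' then (if i' = j' then 0 else w (i',1)) else 0)
          + (if ¬ i = i' then w (i',2) else 0) := by
      intro i'
      rw [Fin.sum_univ_three]
      by_cases h1 : i' = j <;> by_cases h1' : i' = j' <;> by_cases h2 : i = i' <;>
        simp [Sfam, memSC, memSD, memSA, Prod.ext_iff, h1, h1', h2] <;>
        (try ring) <;> (split_ifs <;> simp_all)
    rw [Finset.sum_congr rfl (fun i' _ => h i'), Finset.sum_add_distrib,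
      Finset.sum_add_distrib, Finset.sum_ite_eq, Finset.sum_ite_eq, sum_if_not] at E
    simpa using E
  have hW2 : ∀ i : Fin k, w (i,2) = 0 := by
    intro i
    have e0 := key0 i; have e1 := key1 i; have e2 := key2 i
    linarith [e0, e1, e2, hTot]
  have hTot0 : (∑ i', w (i',0)) = 0 := by
    have e0 := key0 j
    rw [if_pos rfl, hW2 j] at e0
    linarith
  have hTot1 : (∑ i', w (i',1)) = 0 := by
    have e2 := key2 j'
    rw [if_pos rfl, hW2 j'] at e2
    linarith
  have hW0' : ∀ i : Fin k, i ≠ j → w (i,0) = 0 := by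
    intro i hi
    have e0 := key0 i
    rw [if_neg hi, hW2 i, hTot0] at e0
    linarith
  have hW1' : ∀ i : Fin k, i ≠ j' → w (i,1) = 0 := by
    intro i hi
    have e2 := key2 i
    rw [if_neg hi, hW2 i, hTot1] at e2
    linarith
  have hW0j : w (j,0) = 0 := by
    have h := hTot0
    rw [Finset.sum_eq_single_of_mem j (Finset.mem_univ j)
      (fun b _ hb => hW0' b hb)] at h
    exact h
  have hW1j : w (j',1) = 0 := by
    have h := hTot1
    rw [Finset.sum_eq_single_of_mem j' (Finset.mem_univ j')
      (fun b _ hb => hW1' b hb)] at h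
    exact h
  intro s
  obtain ⟨i, q⟩ := s
  rcases fin3cases q with rfl | rfl | rfl
  · by_cases hi : i = j
    · rw [hi]; exact hW0j
    · exact hW0' i hi
  · by_cases hi : i = j'
    · rw [hi]; exact hW1j
    · exact hW1' i hi
  · exact hW2 i


lemma stableSfam (k : ℕ) (j j' : Fin k) (s : Fin k × Fin 3) :
    ∀ u ∈ Sfam k j j' s, ∀ v ∈ Sfam k j j' s, ¬ (Hgraph k).Adj u v := by
  obtain ⟨i, q⟩ := s
  rcases fin3cases q with rfl | rfl | rfl
  · rw [show Sfam k j j' (i, 0) = SC k j i from rfl]; exact stableSC k j i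
  · rw [show Sfam k j j' (i, 1) = SD k j' i from rfl]; exact stableSD k j' i
  · rw [show Sfam k j j' (i, 2) = SA k i from rfl]; exact stableSA k i

lemma tightSfam (k : ℕ) (j j' : Fin k) (hjj : j ≠ j') (s : Fin k × Fin 3) :
    ∑ v ∈ Bset k j j', (if v ∈ Sfam k j j' s then (1 : ℝ) else 0) = (k : ℝ) - 1 := by
  obtain ⟨i, q⟩ := s
  rcases fin3cases q with rfl | rfl | rfl
  · rw [show Sfam k j j' (i, 0) = SC k j i from rfl]; exact tightSC k j j' i hjj
  · rw [show Sfam k j j' (i, 1) = SD k j' i from rfl]; exact tightSD k j j' i hjj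
  · rw [show Sfam k j j' (i, 2) = SA k i from rfl]
    rw [tightSA k j j' i hjj]; ring

set_option maxHeartbeats 2000000 in
theorem Hk_Bset_facet (k : ℕ) (hk : 2 ≤ k) (j j' : Fin k) (hjj : j ≠ j') :
    (∀ x ∈ STAB (Hgraph k), ∑ v ∈ Bset k j j', x v ≤ (k : ℝ) - 1) ∧
    ∃ S : Fin (3 * k) → Finset (Fin k × Fin 3),
      (∀ i, ∀ u ∈ S i, ∀ v ∈ S i, ¬ (Hgraph k).Adj u v) ∧
      AffineIndependent ℝ (fun i => (fun v => if v ∈ S i then (1 : ℝ) else 0)) ∧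
      (∀ i, ∑ v ∈ Bset k j j', (if v ∈ S i then (1 : ℝ) else 0) = (k : ℝ) - 1) := by
  classical
  constructor
  · intro x hx
    have hconv : Convex ℝ {y : Fin k × Fin 3 → ℝ | ∑ v ∈ Bset k j j', y v ≤ (k:ℝ) - 1} :=
      convex_halfSpace_le ⟨fun a b => by simp [Finset.sum_add_distrib], fun c a => by
        simp [Finset.mul_sum]⟩ _
    have hsub : {y : Fin k × Fin 3 → ℝ | ∃ S : Set (Fin k × Fin 3),
        (∀ u ∈ S, ∀ v ∈ S, ¬ (Hgraph k).Adj u v) ∧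
        y = S.indicator fun _ => (1 : ℝ)} ⊆
        {y : Fin k × Fin 3 → ℝ | ∑ v ∈ Bset k j j', y v ≤ (k:ℝ) - 1} := by
      rintro y ⟨S, hS, rfl⟩
      have hind : ∀ v, S.indicator (fun _ => (1:ℝ)) v = if v ∈ S then 1 else 0 := by
        intro v
        by_cases h : v ∈ S <;> simp [h]
      show ∑ v ∈ Bset k j j', S.indicator (fun _ => (1:ℝ)) v ≤ (k:ℝ) - 1
      rw [Finset.sum_congr rfl (fun v _ => hind v), Finset.sum_boole]
      have hcard := card_bound k j j' hjj S (fun u hu v hv => hS u hu v hv)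
      have h1 : (((Bset k j j').filter (· ∈ S)).card : ℝ) ≤ ((k - 1 : ℕ) : ℝ) :=
        Nat.cast_le.mpr hcard
      rwa [Nat.cast_sub (by omega), Nat.cast_one] at h1
    exact convexHull_min hsub hconv hx
  · have e : Fin (3 * k) ≃ Fin k × Fin 3 :=
      (finCongr (by ring : 3 * k = k * 3)).trans finProdFinEquiv.symm
    refine ⟨fun n => Sfam k j j' (e n), ?_, ?_, ?_⟩
    · exact fun n => stableSfam k j j' (e n)
    · exact (affineIndependent_equiv e).mpr (affind k j j' hjj)
    · exact fun n => tightSfam k j j' hjj (e n)
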